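/- Let L₉ be the 3-dimensional complex algebra with basis e₁, e₂, e₃ and nonzero products e₁e₃ = e₁ + e₂, e₃e₃ = e₁. A linear map g : L₉ → L₉ is an algebra automorphism if and only if its matrix with respect to (e₁,e₂,e₃) has rows (1+α₃, 0, α₃), (α₃, 1, α₆), (0, 0, 1) for some α₃, α₆ ∈ ℂ with α₃ ≠ −1. -/
import Mathlib


/-- Multiplication of the algebra `L₉` on `ℂ³` (standard basis `e₁, e₂, e₃`),
with nonzero products `e₁e₃ = e₁ + e₂`, `e₃e₃ = e₁`. -/
def mulL9 (a b : Fin 3 → ℂ) : Fin 3 → ℂ :=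
  ![(a 0 + a 2) * b 2, a 0 * b 2, 0]

/-- A linear map `g : L₉ → L₉` is an algebra automorphism iff its matrix with
respect to `(e₁,e₂,e₃)` has rows `(1+α₃, 0, α₃), (α₃, 1, α₆), (0, 0, 1)`
for some `α₃, α₆ ∈ ℂ` with `α₃ ≠ −1`. -/
theorem L9_automorphisms (g : (Fin 3 → ℂ) →ₗ[ℂ] (Fin 3 → ℂ)) :
    (Function.Bijective g ∧ ∀ x y : Fin 3 → ℂ, g (mulL9 x y) = mulL9 (g x) (g y)) ↔
    ∃ α₃ α₆ : ℂ, α₃ ≠ -1 ∧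
      LinearMap.toMatrix' g = !![1 + α₃, 0, α₃; α₃, 1, α₆; 0, 0, 1] := by
  have hg : ∀ x, g x = (LinearMap.toMatrix' g).mulVec x := by
    intro x
    conv_lhs => rw [← Matrix.toLin'_toMatrix' g]
    rw [Matrix.toLin'_apply]
  set M := LinearMap.toMatrix' g with hM
  constructor
  · rintro ⟨hbij, hmul⟩
    have E33_0 := congrFun (hmul ![0,0,1] ![0,0,1]) 0
    have E33_1 := congrFun (hmul ![0,0,1] ![0,0,1]) 1
    have E33_2 := congrFun (hmul ![0,0,1] ![0,0,1]) 2
    have E13_0 := congrFun (hmul ![1,0,0] ![0,0,1]) 0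
    have E13_1 := congrFun (hmul ![1,0,0] ![0,0,1]) 1
    have E13_2 := congrFun (hmul ![1,0,0] ![0,0,1]) 2
    have E23_1 := congrFun (hmul ![0,1,0] ![0,0,1]) 1
    simp only [hg, mulL9, Matrix.mulVec, dotProduct, Fin.sum_univ_three,
      Matrix.cons_val_zero, Matrix.cons_val_one, Matrix.head_cons,
      Matrix.cons_val_two, Matrix.tail_cons,
      mul_zero, mul_one, zero_mul, one_mul, add_zero, zero_add] at E33_0 E33_1 E33_2 E13_0 E13_1 E13_2 E23_1
    have hinj := hbij.injective
    have hr : M 2 2 ≠ 0 := by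
      intro hr0
      have hu : g ![1,0,0] = g 0 := by
        rw [map_zero]
        funext i
        rw [hg]
        fin_cases i <;>
          simp [Matrix.mulVec, dotProduct, Fin.sum_univ_three]
        · linear_combination E33_0 + (M 0 2 + M 2 2) * hr0
        · linear_combination E33_1 + M 0 2 * hr0
        · linear_combination E33_2
      have := congrFun (hinj hu) 0
      simp at this
    have hb : M 0 1 = 0 := by
      rcases mul_eq_zero.mp E23_1.symm with h | h
      · exact h
      · exact absurd h hr
    have ha : M 0 0 ≠ 0 := by
      intro ha0
      have hu : g ![1,1,0] = g 0 := by
        rw [map_zero]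
        funext i
        rw [hg]
        fin_cases i <;>
          simp [Matrix.mulVec, dotProduct, Fin.sum_univ_three]
        · linear_combination E13_0 + M 2 2 * ha0 + M 2 2 * E33_2
        · linear_combination E13_1 + M 2 2 * ha0
        · linear_combination E13_2
      have := congrFun (hinj hu) 0
      simp at this
    have hr1 : M 2 2 = 1 := by
      have h1 : M 0 0 * (M 2 2 - 1) = 0 := by
        linear_combination -E13_0 - M 2 2 * E33_2 + hb
      rcases mul_eq_zero.mp h1 with h | h
      · exact absurd h ha
      · linear_combination h
    refine ⟨M 0 2, M 1 2, ?_, ?_⟩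
    · intro hc
      apply ha
      linear_combination E33_0 + M 2 2 * hc + M 2 2 * hr1
    · have ha' : M 0 0 = 1 + M 0 2 := by
        linear_combination E33_0 + (M 0 2 + M 2 2 + 1) * hr1
      have hd' : M 1 0 = M 0 2 := by
        linear_combination E33_1 + M 0 2 * hr1
      have he' : M 1 1 = 1 := by
        linear_combination E13_1 + M 0 0 * hr1 + ha' - hd'
      have hq : M 2 1 = 0 := by
        linear_combination E13_2 - E33_2
      conv_lhs => rw [Matrix.eta_fin_three M]
      rw [ha', hb, hd', he', E33_2, hq, hr1]
  · rintro ⟨α₃, α₆, hα, hMat⟩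
    have hgx : ∀ x : Fin 3 → ℂ, g x =
        ![(1 + α₃) * x 0 + α₃ * x 2, α₃ * x 0 + x 1 + α₆ * x 2, x 2] := by
      intro x
      rw [hg, hMat]
      funext i
      fin_cases i <;>
        simp [Matrix.mulVec, dotProduct, Fin.sum_univ_three]
    constructor
    · have hinj : Function.Injective g := by
        rw [← LinearMap.ker_eq_bot, LinearMap.ker_eq_bot']
        intro m hm
        rw [hgx] at hm
        have h0 := congrFun hm 0
        have h1 := congrFun hm 1
        have h2 := congrFun hm 2
        simp only [Matrix.cons_val_zero, Matrix.cons_val_one, Matrix.head_cons,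
          Matrix.cons_val_two, Matrix.tail_cons, Pi.zero_apply] at h0 h1 h2
        have hm0 : m 0 = 0 := by
          rw [h2, mul_zero, add_zero] at h0
          rcases mul_eq_zero.mp h0 with h | h
          · exfalso; apply hα; linear_combination h
          · exact h
        have hm1 : m 1 = 0 := by
          rw [hm0, h2, mul_zero, mul_zero, zero_add, add_zero] at h1
          exact h1
        funext i
        fin_cases i
        · exact hm0
        · exact hm1
        · exact h2
      exact ⟨hinj, LinearMap.injective_iff_surjective.mp hinj⟩
    · intro x y
      funext i
      rw [hgx, hgx, hgx]
      fin_cases i <;>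
        simp [mulL9] <;> ring
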